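/- arXiv:0910.2262 — 2 statements merged into one kernel-verified Lean document; each statement's English description precedes it below -/
import Mathlib

section
/- Let 𝔅 be a Banach algebra such that for every n ∈ ℕ, the formal matrix multiplication Mₙ(𝔅) × Mₙ(𝔅) → Mₙ(𝔅) is bounded by a constant C ≥ 1 independent of n, where Mₙ(𝔅) carries norms making the natural inclusions and the identification Mₙ(Mₘ(𝔅)) ≅ M_{nm}(𝔅) isometric (i.e. an operator space matrix norm structure). Then the multiplication map m : 𝔅 ⊗ 𝔅 → 𝔅 extends to a completely bounded map on the Haagerup tensor product 𝔅 ⊗^h 𝔅 with cb-norm at most C. -/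
/-! Pad the row `a` and the column `b` with zeros to square matrices of size `max 1 k`: their
product is the zero-padding of the `1 × 1` matrix `a * b`. Since padding is isometric, the bound
on square matrix products gives the bound on `‖(a * b) 0 0‖`. -/

/-- Padding of a rectangular matrix with zeros into a larger rectangular matrix. -/
def Matrix.pad {B : Type*} [Zero B] {m n : ℕ} (m' n' : ℕ)
    (A : Matrix (Fin m) (Fin n) B) : Matrix (Fin m') (Fin n') B :=
  Matrix.of fun i j =>
    if h : (i : ℕ) < m ∧ (j : ℕ) < n then A ⟨i, h.1⟩ ⟨j, h.2⟩ else 0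

namespace Matrix

variable {α : Type*}

theorem pad_apply_of_lt [Zero α] {m n m' n' : ℕ} (A : Matrix (Fin m) (Fin n) α)
    {i : Fin m'} {j : Fin n'} (hi : (i : ℕ) < m) (hj : (j : ℕ) < n) :
    A.pad m' n' i j = A ⟨i, hi⟩ ⟨j, hj⟩ :=
  dif_pos ⟨hi, hj⟩

theorem pad_apply_of_not_lt [Zero α] {m n m' n' : ℕ} (A : Matrix (Fin m) (Fin n) α)
    {i : Fin m'} {j : Fin n'} (h : ¬((i : ℕ) < m ∧ (j : ℕ) < n)) :
    A.pad m' n' i j = 0 :=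
  dif_neg h

theorem pad_mul_pad [NonUnitalNonAssocSemiring α] {m k n m' k' n' : ℕ} (hk : k ≤ k')
    (A : Matrix (Fin m) (Fin k) α) (A' : Matrix (Fin k) (Fin n) α) :
    A.pad m' k' * A'.pad k' n' = (A * A').pad m' n' := by
  ext i j
  rw [mul_apply]
  by_cases hij : (i : ℕ) < m ∧ (j : ℕ) < n
  · obtain ⟨hi, hj⟩ := hij
    rw [pad_apply_of_lt _ hi hj, mul_apply]
    refine (Fintype.sum_of_injective (Fin.castLE hk) (Fin.castLE_injective hk) _ _
      (fun l hl => ?_) (fun l => ?_)).symm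
    · have hlk : ¬(l : ℕ) < k := fun hlk => hl ⟨⟨l, hlk⟩, rfl⟩
      rw [pad_apply_of_not_lt A' fun h => hlk h.1, mul_zero]
    · rw [pad_apply_of_lt A (j := Fin.castLE hk l) hi l.isLt,
        pad_apply_of_lt A' (i := Fin.castLE hk l) l.isLt hj]
      rfl
  · rw [pad_apply_of_not_lt _ hij]
    refine Finset.sum_eq_zero fun l _ => ?_
    by_cases hi : (i : ℕ) < m
    · rw [pad_apply_of_not_lt A' fun h => hij ⟨hi, h.2⟩, mul_zero]
    · rw [pad_apply_of_not_lt A fun h => hi h.1, zero_mul]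

theorem eta_fin_one (A : Matrix (Fin 1) (Fin 1) α) : A = of fun _ _ => A 0 0 := by
  ext i j
  rw [Subsingleton.elim i 0, Subsingleton.elim j 0, of_apply]

end Matrix

theorem haagerup_mult_bound_general (B : Type*) [NormedRing B]
    (N : ∀ m n : ℕ, Matrix (Fin m) (Fin n) B → ℝ) (C : ℝ)
    (h11 : ∀ b : B, N 1 1 (Matrix.of fun _ _ => b) = ‖b‖)
    (hpad : ∀ (m n m' n' : ℕ), m ≤ m' → n ≤ n' →
      ∀ A : Matrix (Fin m) (Fin n) B, N m' n' (A.pad m' n') = N m n A)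
    (hmul : ∀ (n : ℕ) (A A' : Matrix (Fin n) (Fin n) B),
      N n n (A * A') ≤ C * N n n A * N n n A') :
    ∀ (k : ℕ) (a : Matrix (Fin 1) (Fin k) B) (b : Matrix (Fin k) (Fin 1) B),
      ‖(a * b) 0 0‖ ≤ C * N 1 k a * N k 1 b := by
  intro k a b
  have h1 : 1 ≤ max 1 k := le_max_left 1 k
  have hk : k ≤ max 1 k := le_max_right 1 k
  rw [← h11, ← Matrix.eta_fin_one, ← hpad 1 1 _ _ h1 h1, ← Matrix.pad_mul_pad hk,
    ← hpad 1 k _ _ h1 hk, ← hpad k 1 _ _ hk h1]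
  exact hmul _ _ _

/-- Let `𝔅` be a Banach algebra carrying an operator-space-like family of
matrix norms `N m n` on the rectangular matrix spaces `M_{m,n}(𝔅)` (the norm on `M_{1,1}(𝔅)`
is the norm of `𝔅`, and the natural inclusions, i.e. paddings by zeros, are isometric).
If formal matrix multiplication `Mₙ(𝔅) × Mₙ(𝔅) → Mₙ(𝔅)` is bounded by `C ≥ 1` for every
`n`, then the multiplication `m : 𝔅 ⊗ 𝔅 → 𝔅` extends to a completely bounded map on the
Haagerup tensor product `𝔅 ⊗^h 𝔅` with cb-norm at most `C`: for every representation of a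
tensor as a row matrix `a` times a column matrix `b`, `‖Σ_k aₖ bₖ‖ ≤ C ‖a‖ ‖b‖`, so that
`‖m(u)‖ ≤ C ‖u‖_h` for every `u ∈ 𝔅 ⊗ 𝔅`. -/
theorem haagerup_mult_bound (B : Type*) [NormedRing B] [NormedAlgebra ℂ B]
    [CompleteSpace B]
    (N : ∀ m n : ℕ, Matrix (Fin m) (Fin n) B → ℝ) (C : ℝ) (hC : 1 ≤ C)
    (h11 : ∀ b : B, N 1 1 (Matrix.of fun _ _ => b) = ‖b‖)
    (hpad : ∀ (m n m' n' : ℕ), m ≤ m' → n ≤ n' →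
      ∀ A : Matrix (Fin m) (Fin n) B, N m' n' (A.pad m' n') = N m n A)
    (hmul : ∀ (n : ℕ) (A A' : Matrix (Fin n) (Fin n) B),
      N n n (A * A') ≤ C * N n n A * N n n A') :
    ∀ (k : ℕ) (a : Matrix (Fin 1) (Fin k) B) (b : Matrix (Fin k) (Fin 1) B),
      ‖(a * b) 0 0‖ ≤ C * N 1 k a * N k 1 b :=
  haagerup_mult_bound_general B N C h11 hpad hmul
end

section
/- Let M₁, …, M_k be von Neumann algebras and n₁, …, n_k ∈ ℕ, and suppose each Mᵢ_* ⊗̂ B(E)-level product extends boundedly, i.e. each Mᵢ ⊗̄ CB(E) is a Banach algebra with multiplication bounded by Cᵢ. Then the direct sum (Mₙ₁(M₁) ⊕ ⋯ ⊕ M_{n_k}(M_k)) ⊗̄ CB(E) is a Banach algebra with multiplication bounded by max_i (n_i² · Cᵢ) — in particular, a subhomogeneous von Neumann algebra tensored with CB(E) admits a bounded (not necessarily contractive) extension of the multiplication. -/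
/-! Each component is handled separately: an entry of the product `F G` is a sum of `n` products,
each bounded by `C ‖F‖ ‖G‖`, and the passage from the max-entry norm back to `N` costs a further
factor `n`. Taking suprema over the finitely many components then gives the bound
`max_i (nᵢ² Cᵢ)`. -/

theorem Real.iSup_mul_le_iSup_mul_iSup {ι : Type*} [Finite ι] {x y : ι → ℝ}
    (hx : ∀ i, 0 ≤ x i) (hy : ∀ i, 0 ≤ y i) :
    ⨆ i, x i * y i ≤ (⨆ i, x i) * ⨆ i, y i :=
  Real.iSup_le
    (fun i => mul_le_mul (le_ciSup (Finite.bddAbove_range x) i)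
      (le_ciSup (Finite.bddAbove_range y) i) (hy i) (Real.iSup_nonneg hx))
    (mul_nonneg (Real.iSup_nonneg hx) (Real.iSup_nonneg hy))

theorem norm_sum_apply_le_card_mul {E F G m : Type*} [SeminormedAddCommGroup E]
    [SeminormedAddCommGroup F] [SeminormedAddCommGroup G] [Fintype m] {μ : E → F → G} {C : ℝ}
    (hC : 0 ≤ C) (hμ : ∀ x y, ‖μ x y‖ ≤ C * ‖x‖ * ‖y‖) {u : m → E} {v : m → F} {a b : ℝ}
    (hu : ∀ r, ‖u r‖ ≤ a) (hv : ∀ r, ‖v r‖ ≤ b) :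
    ‖∑ r, μ (u r) (v r)‖ ≤ Fintype.card m * (C * a * b) :=
  calc ‖∑ r, μ (u r) (v r)‖
      ≤ ∑ r, ‖μ (u r) (v r)‖ := norm_sum_le _ _
    _ ≤ ∑ _r : m, C * a * b := Finset.sum_le_sum fun r _ =>
        (hμ _ _).trans (by have := (norm_nonneg _).trans (hu r); gcongr; exacts [hu r, hv r])
    _ = Fintype.card m * (C * a * b) := by simp

theorem matrix_norm_mul_le_sq_card_mul {B : Type*} [SeminormedAddCommGroup B] {μ : B → B → B}
    {C : ℝ} (hC : 0 ≤ C) (hμ : ∀ x y, ‖μ x y‖ ≤ C * ‖x‖ * ‖y‖) {n : ℕ}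
    {N : Matrix (Fin n) (Fin n) B → ℝ} (hNdom : ∀ A p q, ‖A p q‖ ≤ N A)
    (hNbd : ∀ A (r : ℝ), (∀ p q, ‖A p q‖ ≤ r) → N A ≤ n * r)
    (F G : Matrix (Fin n) (Fin n) B) :
    N (Matrix.of fun p q => ∑ r, μ (F p r) (G r q)) ≤ (n ^ 2 * C) * N F * N G := by
  have hentry (p q : Fin n) : ‖∑ r, μ (F p r) (G r q)‖ ≤ n * (C * N F * N G) := by
    simpa using norm_sum_apply_le_card_mul hC hμ (fun r => hNdom F p r) (fun r => hNdom G r q)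
  calc N (Matrix.of fun p q => ∑ r, μ (F p r) (G r q))
      ≤ n * (n * (C * N F * N G)) := hNbd _ _ hentry
    _ = (n ^ 2 * C) * N F * N G := by ring

theorem subhomogeneous_tensor_banach_algebra_general
    (k : ℕ) (n : Fin k → ℕ) (B : Fin k → Type*)
    [∀ i, NormedAddCommGroup (B i)] [∀ i, NormedSpace ℂ (B i)]
    (mul : ∀ i, B i →L[ℂ] B i →L[ℂ] B i) (C : Fin k → ℝ) (hC : ∀ i, 0 ≤ C i)
    (hmul : ∀ i (a b : B i), ‖mul i a b‖ ≤ C i * ‖a‖ * ‖b‖)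
    (N : ∀ i, Matrix (Fin (n i)) (Fin (n i)) (B i) → ℝ)
    (hN0 : ∀ i A, 0 ≤ N i A)
    (hNdom : ∀ i (A : Matrix (Fin (n i)) (Fin (n i)) (B i)) (p q), ‖A p q‖ ≤ N i A)
    (hNbd : ∀ i (A : Matrix (Fin (n i)) (Fin (n i)) (B i)) (r : ℝ),
      (∀ p q, ‖A p q‖ ≤ r) → N i A ≤ (n i : ℝ) * r)
    (F G : ∀ i, Matrix (Fin (n i)) (Fin (n i)) (B i)) :
    (⨆ i, N i (Matrix.of fun p q => ∑ r : Fin (n i), mul i (F i p r) (G i r q)))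
      ≤ (⨆ i, ((n i : ℝ) ^ 2 * C i)) * (⨆ i, N i (F i)) * (⨆ i, N i (G i)) := by
  have hconst_nonneg i : 0 ≤ (n i : ℝ) ^ 2 * C i := by have := hC i; positivity
  calc (⨆ i, N i (Matrix.of fun p q => ∑ r : Fin (n i), mul i (F i p r) (G i r q)))
      ≤ ⨆ i, (n i : ℝ) ^ 2 * C i * N i (F i) * N i (G i) :=
        ciSup_mono (Finite.bddAbove_range _) fun i =>
          matrix_norm_mul_le_sq_card_mul (hC i) (hmul i) (hNdom i) (hNbd i) (F i) (G i)
    _ ≤ (⨆ i, (n i : ℝ) ^ 2 * C i * N i (F i)) * ⨆ i, N i (G i) :=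
        Real.iSup_mul_le_iSup_mul_iSup (fun i => mul_nonneg (hconst_nonneg i) (hN0 i _))
          (fun i => hN0 i _)
    _ ≤ (⨆ i, (n i : ℝ) ^ 2 * C i) * (⨆ i, N i (F i)) * ⨆ i, N i (G i) := by
        gcongr
        · exact Real.iSup_nonneg fun i => hN0 i _
        · exact Real.iSup_mul_le_iSup_mul_iSup hconst_nonneg fun i => hN0 i _

/-- Let `M₁, …, M_k` be von Neumann algebras and suppose each
`Bᵢ = Mᵢ ⊗̄ CB(E)` (for a reflexive operator space `E`) is a Banach algebra whose
multiplication `mulᵢ` is bounded by `Cᵢ`.  Via the identification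
`M_{nᵢ}(Mᵢ) ⊗̄ CB(E) ≅ M_{nᵢ}(Mᵢ ⊗̄ CB(E)) = M_{nᵢ}(Bᵢ)`, equip `M_{nᵢ}(Bᵢ)` with any
norm `Nᵢ` dominating, and dominated up to the factor `nᵢ` by, the max-entry norm.
Then the ℓ^∞-direct sum `(M_{n₁}(M₁) ⊕ ⋯ ⊕ M_{n_k}(M_k)) ⊗̄ CB(E) = ⊕ᵢ M_{nᵢ}(Bᵢ)`
is a Banach algebra with multiplication bounded by `max_i (nᵢ² Cᵢ)`: in particular a
subhomogeneous von Neumann algebra tensored with `CB(E)` admits a bounded (not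
necessarily contractive) extension of the multiplication. -/
theorem subhomogeneous_tensor_banach_algebra
    (k : ℕ) (n : Fin k → ℕ) (B : Fin k → Type*)
    [∀ i, NormedAddCommGroup (B i)] [∀ i, NormedSpace ℂ (B i)] [∀ i, CompleteSpace (B i)]
    (mul : ∀ i, B i →L[ℂ] B i →L[ℂ] B i) (C : Fin k → ℝ) (hC : ∀ i, 0 ≤ C i)
    (hmul : ∀ i (a b : B i), ‖mul i a b‖ ≤ C i * ‖a‖ * ‖b‖)
    (N : ∀ i, Matrix (Fin (n i)) (Fin (n i)) (B i) → ℝ)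
    (hN0 : ∀ i A, 0 ≤ N i A)
    (hNdom : ∀ i (A : Matrix (Fin (n i)) (Fin (n i)) (B i)) (p q), ‖A p q‖ ≤ N i A)
    (hNbd : ∀ i (A : Matrix (Fin (n i)) (Fin (n i)) (B i)) (r : ℝ),
      (∀ p q, ‖A p q‖ ≤ r) → N i A ≤ (n i : ℝ) * r)
    (F G : ∀ i, Matrix (Fin (n i)) (Fin (n i)) (B i)) :
    (⨆ i, N i (Matrix.of fun p q => ∑ r : Fin (n i), mul i (F i p r) (G i r q)))
      ≤ (⨆ i, ((n i : ℝ) ^ 2 * C i)) * (⨆ i, N i (F i)) * (⨆ i, N i (G i)) :=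
  subhomogeneous_tensor_banach_algebra_general k n B mul C hC hmul N hN0 hNdom hNbd F G
end
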